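/- arXiv:2211.13645 — 2 statements merged into one kernel-verified Lean document; each statement's English description precedes it below -/
import Mathlib

section
/- For λ > −1, t ∈ ℝ, integer m ≥ 2 and n ≥ 2, let x_{1,n} be the largest zero of the monic generalised higher order Freud polynomial P_n(x;t,λ). Then for every ε > 0, 0 < x_{1,n} < max_{1 ≤ k ≤ n−1} √( c_n β_k(t;λ) ), where c_n = 4 cos²(π/(n+1)) + ε and β_k(t;λ) are the recurrence coefficients. -/
/-!
The largest zero of `P_n` is positive by the usual interlacing induction: at the largest zero
`y` of `P_{k+1}` the recurrence gives `P_{k+2}(y) = -β_{k+1} P_k(y) < 0`, so `P_{k+2}` has a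
larger zero.

For the upper bound, put `θ = π/(n+1)` and suppose `4 cos²θ β_k < x²` for `1 ≤ k ≤ n-1`, with
`x > 0`. Then `b_k = ρ^k sin((k+1)θ)`, `ρ = x/(2 cos θ)`, solves the three-term recurrence with
constant coefficient `ρ² > β_k`, is positive for `k < n` and vanishes at `k = n`. Comparing
`a_k = P_k(x)` with `b` (Sturm), the Casoratian `a_{k+1} b_k - a_k b_{k+1}` stays nonnegative and
becomes positive, which at `k + 1 = n` says `P_n(x) b_{n-1} > 0`; so `x` is not a zero of `P_n`.
-/

open MeasureTheory Real Polynomial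

/-- The generalised higher order Freud weight `ω(x;t,λ) = |x|^{2λ+1} exp(t x² − x^{2m})`. -/
noncomputable def freudWeight (m : ℕ) (lam t x : ℝ) : ℝ :=
  |x| ^ (2 * lam + 1) * Real.exp (t * x ^ 2 - x ^ (2 * m))

open Filter

namespace Polynomial.Monic

variable {p : ℝ[X]}

theorem exists_isRoot_gt_of_eval_neg (hp : p.Monic) {a : ℝ} (ha : p.eval a < 0) :
    ∃ r, a < r ∧ p.IsRoot r := by
  have hdeg : 0 < p.degree := by
    refine natDegree_pos_iff_degree_pos.mp (Nat.pos_of_ne_zero fun h => ?_)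
    norm_num [hp.natDegree_eq_zero.mp h] at ha
  have htop : Tendsto (fun x => p.eval x) atTop atTop :=
    p.tendsto_atTop_of_leadingCoeff_nonneg hdeg (by simp [hp.leadingCoeff])
  obtain ⟨B, hB, haB⟩ :=
    ((htop.eventually (eventually_gt_atTop 0)).and (eventually_gt_atTop a)).exists
  obtain ⟨r, hr, hroot⟩ :=
    intermediate_value_Ioo haB.le p.continuous.continuousOn ⟨ha, hB⟩
  exact ⟨r, hr.1, hroot⟩

theorem exists_largest_isRoot_gt_of_eval_neg (hp : p.Monic) {a : ℝ} (ha : p.eval a < 0) :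
    ∃ r, a < r ∧ p.IsRoot r ∧ ∀ x, r < x → 0 < p.eval x := by
  have hmem : ∀ {z}, z ∈ p.roots.toFinset ↔ p.IsRoot z := by
    simp [mem_roots hp.ne_zero]
  obtain ⟨r₀, har₀, hr₀⟩ := hp.exists_isRoot_gt_of_eval_neg ha
  have hne : p.roots.toFinset.Nonempty := ⟨r₀, hmem.mpr hr₀⟩
  have hle : ∀ z, p.IsRoot z → z ≤ p.roots.toFinset.max' hne :=
    fun z hz => Finset.le_max' _ z (hmem.mpr hz)
  refine ⟨_, har₀.trans_le (hle r₀ hr₀), hmem.mp (Finset.max'_mem _ hne), fun x hx => ?_⟩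
  by_contra! hneg
  rcases hneg.lt_or_eq with hneg | hzero
  · obtain ⟨z, hxz, hz⟩ := hp.exists_isRoot_gt_of_eval_neg hneg
    exact (hle z hz).not_gt (hx.trans hxz)
  · exact (hle x hzero).not_gt hx

end Polynomial.Monic

theorem pos_of_three_term_recurrence_comparison {a b β : ℕ → ℝ} {x γ : ℝ} {n : ℕ}
    (ha : ∀ k, a (k + 2) = x * a (k + 1) - β (k + 1) * a k)
    (hb : ∀ k, b (k + 2) = x * b (k + 1) - γ * b k)
    (hγ : 0 ≤ γ) (hβγ : ∀ k, 1 ≤ k → k < n → β k < γ)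
    (ha₀ : 0 < a 0) (hab₀ : a 0 * b 1 ≤ a 1 * b 0)
    (hb_pos : ∀ k < n, 0 < b k) (hb_n : b n = 0) (hn : 2 ≤ n) :
    0 < a n := by
  have casoratian_step : ∀ k, k + 2 ≤ n → 0 < a k → a k * b (k + 1) ≤ a (k + 1) * b k →
      a (k + 1) * b (k + 2) < a (k + 2) * b (k + 1) := by
    intro k hk hak hΔ
    have casoratian : a (k + 2) * b (k + 1) - a (k + 1) * b (k + 2) =
        γ * (a (k + 1) * b k - a k * b (k + 1)) + (γ - β (k + 1)) * a k * b (k + 1) := by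
      rw [ha, hb]
      ring
    have hβ := sub_pos.mpr (hβγ (k + 1) (by omega) (by omega))
    linarith [mul_nonneg hγ (sub_nonneg.mpr hΔ), mul_pos (mul_pos hβ hak) (hb_pos (k + 1) hk)]
  have invariant : ∀ k, k + 1 < n → 0 < a k ∧ a k * b (k + 1) ≤ a (k + 1) * b k := by
    intro k
    induction k with
    | zero => exact fun _ => ⟨ha₀, hab₀⟩
    | succ k ih =>
      intro hk
      obtain ⟨hak, hΔ⟩ := ih (by omega)
      refine ⟨pos_of_mul_pos_left ((mul_pos hak (hb_pos (k + 1) (by omega))).trans_le hΔ)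
        (hb_pos k (by omega)).le, (casoratian_step k (by omega) hak hΔ).le⟩
  obtain ⟨k, rfl⟩ : ∃ k, n = k + 2 := ⟨n - 2, by omega⟩
  obtain ⟨hak, hΔ⟩ := invariant k (by omega)
  have hpos := casoratian_step k le_rfl hak hΔ
  rw [hb_n, mul_zero] at hpos
  exact pos_of_mul_pos_left hpos (hb_pos (k + 1) (by omega)).le

theorem pow_mul_sin_recurrence (ρ θ : ℝ) (k : ℕ) :
    ρ ^ (k + 2) * Real.sin ((k + 2 + 1 : ℕ) * θ) =
      2 * ρ * Real.cos θ * (ρ ^ (k + 1) * Real.sin ((k + 1 + 1 : ℕ) * θ)) -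
        ρ ^ 2 * (ρ ^ k * Real.sin ((k + 1 : ℕ) * θ)) := by
  have h := Real.sin_add (((k : ℝ) + 2) * θ) θ
  have h' := Real.sin_sub (((k : ℝ) + 2) * θ) θ
  push_cast
  rw [show ((k : ℝ) + 2 + 1) * θ = (k + 2) * θ + θ by ring, h,
    show ((k : ℝ) + 1 + 1) * θ = (k + 2) * θ by ring,
    show ((k : ℝ) + 1) * θ = (k + 2) * θ - θ by ring, h']
  ring

section Recurrence

variable {P : ℕ → ℝ[X]} {β : ℕ → ℝ}

theorem eval_add_two_of_recurrence
    (hrec : ∀ k, 1 ≤ k → P (k + 1) = X * P k - C (β k) * P (k - 1)) (k : ℕ) (x : ℝ) :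
    (P (k + 2)).eval x = x * (P (k + 1)).eval x - β (k + 1) * (P k).eval x := by
  simp [hrec (k + 1) (by omega)]

theorem eval_add_two_neg_of_isRoot (hβpos : ∀ k, 1 ≤ k → 0 < β k)
    (hrec : ∀ k, 1 ≤ k → P (k + 1) = X * P k - C (β k) * P (k - 1)) {k : ℕ} {y : ℝ}
    (hroot : (P (k + 1)).IsRoot y) (hpos : 0 < (P k).eval y) :
    (P (k + 2)).eval y < 0 := by
  rw [eval_add_two_of_recurrence hrec, hroot.eq_zero, mul_zero, zero_sub, neg_neg_iff_pos]
  exact mul_pos (hβpos (k + 1) (by omega)) hpos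

theorem exists_largest_isRoot_nonneg (hmonic : ∀ k, (P k).Monic)
    (hβpos : ∀ k, 1 ≤ k → 0 < β k) (hP0 : P 0 = 1) (hP1 : P 1 = X)
    (hrec : ∀ k, 1 ≤ k → P (k + 1) = X * P k - C (β k) * P (k - 1)) (k : ℕ) :
    ∃ y, 0 ≤ y ∧ (P (k + 1)).IsRoot y ∧ (∀ x, y < x → 0 < (P (k + 1)).eval x) ∧
      ∀ x, y ≤ x → 0 < (P k).eval x := by
  induction k with
  | zero => exact ⟨0, le_rfl, by simp [hP1], fun x hx => by simpa [hP1], fun x _ => by simp [hP0]⟩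
  | succ k ih =>
    obtain ⟨y, hy, hroot, hpos, hprev⟩ := ih
    obtain ⟨r, hyr, hr, hbeyond⟩ := (hmonic (k + 2)).exists_largest_isRoot_gt_of_eval_neg
      (eval_add_two_neg_of_isRoot hβpos hrec hroot (hprev y le_rfl))
    exact ⟨r, hy.trans hyr.le, hr, hbeyond, fun x hx => hpos x (hyr.trans_le hx)⟩

theorem exists_pos_isRoot (hmonic : ∀ k, (P k).Monic)
    (hβpos : ∀ k, 1 ≤ k → 0 < β k) (hP0 : P 0 = 1) (hP1 : P 1 = X)
    (hrec : ∀ k, 1 ≤ k → P (k + 1) = X * P k - C (β k) * P (k - 1)) (k : ℕ) :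
    ∃ y, 0 < y ∧ (P (k + 2)).IsRoot y := by
  obtain ⟨y, hy, hroot, -, hprev⟩ := exists_largest_isRoot_nonneg hmonic hβpos hP0 hP1 hrec k
  obtain ⟨r, hyr, hr⟩ := (hmonic (k + 2)).exists_isRoot_gt_of_eval_neg
    (eval_add_two_neg_of_isRoot hβpos hrec hroot (hprev y le_rfl))
  exact ⟨r, hy.trans_lt hyr, hr⟩

theorem eval_pos_of_four_cos_sq_mul_lt (hP0 : P 0 = 1) (hP1 : P 1 = X)
    (hrec : ∀ k, 1 ≤ k → P (k + 1) = X * P k - C (β k) * P (k - 1))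
    {n : ℕ} (hn : 2 ≤ n) {x : ℝ} (hx : 0 < x)
    (hβ : ∀ k, 1 ≤ k → k ≤ n - 1 → 4 * Real.cos (Real.pi / (n + 1)) ^ 2 * β k < x ^ 2) :
    0 < (P n).eval x := by
  set θ := Real.pi / (n + 1)
  have hθ : 0 < θ := by positivity
  have hnθ : (n + 1 : ℝ) * θ = Real.pi := mul_div_cancel₀ _ (by positivity)
  have hcos : 0 < Real.cos θ := by
    refine Real.cos_pos_of_mem_Ioo ⟨by linarith [Real.pi_pos], ?_⟩
    have : (3 : ℝ) ≤ n + 1 := by exact_mod_cast Nat.succ_le_succ hn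
    nlinarith [Real.pi_pos]
  set ρ := x / (2 * Real.cos θ)
  have hρ : 0 < ρ := by positivity
  have hx_eq : x = 2 * ρ * Real.cos θ := by simp only [ρ]; field_simp
  refine pos_of_three_term_recurrence_comparison (a := fun k => (P k).eval x)
    (b := fun k => ρ ^ k * Real.sin ((k + 1 : ℕ) * θ)) (γ := ρ ^ 2) (fun k => eval_add_two_of_recurrence hrec k x) ?_ (sq_nonneg ρ) ?_
    (by simp [hP0]) ?_ ?_ ?_ hn
  · intro k
    rw [hx_eq]
    exact pow_mul_sin_recurrence ρ θ k
  · intro k hk hkn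
    have h := hβ k hk (by omega)
    rw [hx_eq] at h
    nlinarith
  · refine le_of_eq ?_
    simp only [hP0, hP1, eval_one, eval_X]
    push_cast
    simp only [one_mul, pow_one, pow_zero, Real.sin_two_mul]
    rw [hx_eq]
    ring
  · intro k hk
    refine mul_pos (pow_pos hρ k) (Real.sin_pos_of_pos_of_lt_pi (by positivity) ?_)
    rw [← hnθ]
    exact mul_lt_mul_of_pos_right (by exact_mod_cast Nat.succ_lt_succ hk) hθ
  · rw [Nat.cast_succ, hnθ, Real.sin_pi, mul_zero]

end Recurrence

theorem largest_zero_bound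
    (P : ℕ → Polynomial ℝ) (β : ℕ → ℝ)
    (hmonic : ∀ k, (P k).Monic)
    (hβpos : ∀ k, 1 ≤ k → 0 < β k)
    (hP0 : P 0 = 1) (hP1 : P 1 = X)
    (hrec : ∀ k, 1 ≤ k → P (k + 1) = X * P k - C (β k) * P (k - 1))
    (n : ℕ) (hn : 2 ≤ n) (x1 : ℝ)
    (hroot : (P n).IsRoot x1) (hmax : ∀ y : ℝ, (P n).IsRoot y → y ≤ x1) :
    ∀ ε : ℝ, 0 < ε →
      0 < x1 ∧
      x1 < (Finset.Icc 1 (n - 1)).sup' (Finset.nonempty_Icc.mpr (by omega))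
        (fun k => Real.sqrt ((4 * Real.cos (Real.pi / ((n : ℝ) + 1)) ^ 2 + ε) * β k)) := by
  intro ε hε
  obtain ⟨k, rfl⟩ : ∃ k, n = k + 2 := ⟨n - 2, by omega⟩
  obtain ⟨y, hy, hyroot⟩ := exists_pos_isRoot hmonic hβpos hP0 hP1 hrec k
  have hx1 : 0 < x1 := hy.trans_le (hmax y hyroot)
  refine ⟨hx1, lt_of_not_ge fun hle => ?_⟩
  refine (eval_pos_of_four_cos_sq_mul_lt hP0 hP1 hrec hn hx1 fun j hj hjn => ?_).ne' hroot
  have hsqrt := (Finset.le_sup' _ (Finset.mem_Icc.mpr ⟨hj, hjn⟩)).trans hle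
  rw [Real.sqrt_le_left hx1.le] at hsqrt
  linarith [mul_pos hε (hβpos j hj)]
end

section
/- For integer m ≥ 2 and n ≥ 1, let 0 < x_{⌊n/2⌋,n}(t,λ) < ⋯ < x_{2,n}(t,λ) < x_{1,n}(t,λ) denote the positive zeros of the monic polynomial P_n(x;t,λ) orthogonal with respect to the generalised higher order Freud weight |x|^{2λ+1} exp(t x² − x^{2m}). Then for each fixed ν ∈ {1, …, ⌊n/2⌋}, the zero x_{ν,n}(t,λ) is strictly increasing in λ (for λ > −1 with t fixed) and strictly increasing in t (for t ∈ ℝ with λ > −1 fixed): if λ₁ < λ₂ then x_{ν,n}(t,λ₁) < x_{ν,n}(t,λ₂), and if t₁ < t₂ then x_{ν,n}(t₁,λ) < x_{ν,n}(t₂,λ). -/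
/-!
Let `p` and `q` be the monic orthogonal polynomials of degree `n` for two even weights `w₁` and
`w₂ = g w₁`, where `g` is strictly increasing in `|x|` (for the Freud weight, `g = |x|^{2(λ₂-λ₁)}`
or `g = exp((t₂-t₁) x²)`).

For a positive zero `r` of `p`, the quotient `a_r = p / (x² - r²)` has degree `n - 2` and the
parity of `n`. Since `(x² - r²) a_r = p` is orthogonal to everything of lower degree, the form
`∫ x² f h w₁` acts as `r²` times `∫ f h w₁` on `a_r`, which makes the `a_r` orthogonal to each
other. Hence `∫ x² f² w₁ ≥ z₁² ∫ f² w₁` on the span of the `a_r` for the `ν` largest zeros `r ≥ z₁`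
of `p`, and `∫ x² f² w₂ ≤ z₂² ∫ f² w₂` on the span of the analogous quotients of `q` for its
`⌊n/2⌋ - ν + 1` positive zeros `r ≤ z₂`. Both spans lie in the `⌊n/2⌋`-dimensional space of
polynomials of degree `≤ n - 2` with the parity of `n`, so they share some `f ≠ 0`. Chebyshev's
integral inequality for the measure `f² w₁ dx` and the functions `x²` and `g` then gives
`z₁² ≤ ∫ x² f² w₁ / ∫ f² w₁ < ∫ x² f² w₂ / ∫ f² w₂ ≤ z₂²`.
-/

open MeasureTheory Real Polynomial

/-- `z` is the `ν`-th largest positive zero of the polynomial `p`: it is a positive root of `p`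
and exactly `ν − 1` distinct roots of `p` exceed it. -/
def IsNthLargestPosZero (p : Polynomial ℝ) (ν : ℕ) (z : ℝ) : Prop :=
  0 < z ∧ p.IsRoot z ∧ (p.roots.toFinset.filter (fun y => z < y)).card = ν - 1

open Set Filter

theorem Function.Even.integrable_of_integrableOn_Ioi {E : Type*} [NormedAddCommGroup E]
    {f : ℝ → E} (hf : Function.Even f) (h : IntegrableOn f (Ioi 0)) : Integrable f := by
  rw [← integrableOn_univ, ← Iio_union_Ici (a := (0 : ℝ)), integrableOn_union,
    integrableOn_Ici_iff_integrableOn_Ioi]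
  refine ⟨?_, h⟩
  rw [← (Measure.measurePreserving_neg (volume : Measure ℝ)).integrableOn_comp_preimage
    (Homeomorph.neg ℝ).measurableEmbedding]
  simpa [Function.comp_def, hf _] using h

/-- Chebyshev's integral inequality, strict form: twice the difference of the two sides is the
integral of `(φ x - φ y) (g x - g y) u x u y` over `μ.prod μ`. -/
theorem integral_mul_integral_lt_integral_mul_integral {α : Type*} [MeasurableSpace α]
    {μ : Measure α} [SFinite μ] {u φ g : α → ℝ} (hu : ∀ x, 0 ≤ u x) (hiu : Integrable u μ)
    (hiφ : Integrable (fun x => φ x * u x) μ) (hig : Integrable (fun x => g x * u x) μ)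
    (hiφg : Integrable (fun x => φ x * g x * u x) μ)
    (hmono : ∀ x y, 0 ≤ (φ x - φ y) * (g x - g y))
    (hpos : 0 < μ.prod μ {q | 0 < (φ q.1 - φ q.2) * (g q.1 - g q.2) * (u q.1 * u q.2)}) :
    (∫ x, φ x * u x ∂μ) * ∫ x, g x * u x ∂μ < (∫ x, φ x * g x * u x ∂μ) * ∫ x, u x ∂μ := by
  set H : α × α → ℝ := fun q => (φ q.1 - φ q.2) * (g q.1 - g q.2) * (u q.1 * u q.2)
  have i₁ := hiφg.mul_prod hiu
  have i₂ := hiφ.mul_prod hig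
  have i₃ := hig.mul_prod hiφ
  have i₄ := hiu.mul_prod hiφg
  have hH : H = fun q => φ q.1 * g q.1 * u q.1 * u q.2 - φ q.1 * u q.1 * (g q.2 * u q.2)
      - g q.1 * u q.1 * (φ q.2 * u q.2) + u q.1 * (φ q.2 * g q.2 * u q.2) := by
    ext q; simp only [H]; ring
  have hint : ∫ q, H q ∂μ.prod μ = 2 * ((∫ x, φ x * g x * u x ∂μ) * ∫ x, u x ∂μ
      - (∫ x, φ x * u x ∂μ) * ∫ x, g x * u x ∂μ) := by
    simp only [hH]
    rw [integral_add (by exact (i₁.sub i₂).sub i₃) i₄, integral_sub (by exact i₁.sub i₂) i₃,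
      integral_sub i₁ i₂, integral_prod_mul (fun x => φ x * g x * u x) u,
      integral_prod_mul (fun x => φ x * u x) (fun x => g x * u x),
      integral_prod_mul (fun x => g x * u x) (fun x => φ x * u x),
      integral_prod_mul u (fun x => φ x * g x * u x)]
    ring
  have hHpos : 0 < ∫ q, H q ∂μ.prod μ := by
    have hHnonneg : 0 ≤ H := fun q => mul_nonneg (hmono _ _) (mul_nonneg (hu _) (hu _))
    rw [integral_pos_iff_support_of_nonneg hHnonneg (hH ▸ ((i₁.sub i₂).sub i₃).add i₄)]
    exact hpos.trans_le (measure_mono fun q hq => (Set.mem_ofPred.mp hq).ne')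
  linarith

theorem LinearMap.BilinForm.apply_sum_smul_self_of_iIsOrtho {R M ι : Type*} [CommSemiring R]
    [AddCommMonoid M] [Module R M] [Fintype ι] {B : LinearMap.BilinForm R M} {v : ι → M}
    (hv : B.iIsOrtho v) (c : ι → R) :
    B (∑ i, c i • v i) (∑ i, c i • v i) = ∑ i, c i * c i * B (v i) (v i) := by
  simp only [map_sum, map_smul, LinearMap.sum_apply, LinearMap.smul_apply, smul_eq_mul]
  refine Finset.sum_congr rfl fun i _ => ?_
  rw [Finset.sum_eq_single i (fun j _ hji => by rw [iIsOrtho_def.mp hv j i hji, mul_zero])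
    (by simp)]
  ring

theorem Submodule.exists_ne_zero_mem_inf_of_finrank_lt {K V : Type*} [DivisionRing K]
    [AddCommGroup V] [Module K V] {W V₁ V₂ : Submodule K V} [FiniteDimensional K W]
    (h₁ : V₁ ≤ W) (h₂ : V₂ ≤ W)
    (h : Module.finrank K W < Module.finrank K V₁ + Module.finrank K V₂) :
    ∃ x ≠ 0, x ∈ V₁ ∧ x ∈ V₂ := by
  have := Submodule.finiteDimensional_of_le h₁
  have := Submodule.finiteDimensional_of_le h₂
  have hsup := Submodule.finrank_mono (sup_le h₁ h₂)
  have hdim := Submodule.finrank_sup_add_finrank_inf_eq V₁ V₂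
  obtain ⟨x, hx, hx0⟩ := Submodule.exists_mem_ne_zero_of_ne_bot (p := V₁ ⊓ V₂) fun hbot => by
    rw [hbot, finrank_bot] at hdim
    omega
  exact ⟨x, hx0, hx.1, hx.2⟩

theorem Finset.card_filter_pos_eq_half {α : Type*} [AddCommGroup α] [LinearOrder α]
    [IsOrderedAddMonoid α] {s : Finset α} (hs : ∀ x ∈ s, -x ∈ s) :
    (s.filter (0 < ·)).card = s.card / 2 := by
  have hneg : s.filter (· < 0) = (s.filter (0 < ·)).image Neg.neg := by
    ext x
    simp only [mem_filter, mem_image]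
    exact ⟨fun ⟨hx, hx0⟩ => ⟨-x, ⟨hs x hx, neg_pos.mpr hx0⟩, neg_neg x⟩,
      fun ⟨y, ⟨hy, hy0⟩, hyx⟩ => hyx ▸ ⟨hs y hy, neg_neg_iff_pos.mpr hy0⟩⟩
  have hcard_neg : (s.filter (· < 0)).card = (s.filter (0 < ·)).card := by
    rw [hneg, card_image_of_injective _ neg_injective]
  have hdisj : Disjoint (s.filter (0 < ·)) (s.filter (· < 0)) :=
    disjoint_filter.mpr fun x _ h₁ h₂ => (h₁.trans h₂).false
  have hle : (s.filter (0 < ·)).card + (s.filter (· < 0)).card ≤ s.card := by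
    rw [← card_union_of_disjoint hdisj]
    exact card_le_card (union_subset (filter_subset _ _) (filter_subset _ _))
  have hge : s.card ≤ (s.filter (0 < ·)).card + (s.filter (· < 0)).card + 1 := by
    rw [← card_union_of_disjoint hdisj, ← card_singleton (0 : α)]
    refine (card_le_card fun x hx => ?_).trans (card_union_le _ _)
    simp only [mem_union, mem_filter, mem_singleton]
    rcases lt_trichotomy 0 x with h | h | h
    · exact .inl (.inl ⟨hx, h⟩)
    · exact .inr h.symm
    · exact .inl (.inr ⟨hx, h⟩)
  omega

lemma sq_sub_sq_mul_sub_nonneg {g : ℝ → ℝ} (hg_mono : ∀ x y, |x| < |y| → g x < g y) (x y : ℝ) :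
    0 ≤ (x ^ 2 - y ^ 2) * (g x - g y) := by
  rcases lt_trichotomy |x| |y| with h | h | h
  · nlinarith [hg_mono x y h, sq_lt_sq.mpr h]
  · simp [sq_eq_sq_iff_abs_eq_abs x y |>.mpr h]
  · nlinarith [hg_mono y x h, sq_lt_sq.mpr h]

lemma volume_prod_setOf_pos_pos {H : ℝ × ℝ → ℝ} {M : ℝ}
    (hH : ∀ x y, M < x → x < y → 0 < H (x, y)) :
    0 < (volume : Measure ℝ).prod volume {q | 0 < H q} :=
  (IsOpen.measure_pos _ ((isOpen_lt (f := fun _ : ℝ × ℝ => M) continuous_const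
    continuous_fst).inter (isOpen_lt continuous_fst continuous_snd))
    ⟨(M + 1, M + 2), by norm_num⟩).trans_le (measure_mono fun q ⟨hq₁, hq₂⟩ => hH _ _ hq₁ hq₂)

lemma Polynomial.exists_forall_gt_eval_ne_zero {f : ℝ[X]} (hf : f ≠ 0) :
    ∃ M, 0 ≤ M ∧ ∀ x, M < x → f.eval x ≠ 0 := by
  obtain ⟨a, ha⟩ := eventually_atTop.mp (eventually_atTop_not_isRoot f hf)
  exact ⟨max a 0, le_max_right _ _, fun x hx => ha x (le_max_left _ _ |>.trans hx.le)⟩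

theorem Polynomial.Monic.exists_monic_mul_nonneg {p : ℝ[X]} (hp : p.Monic) :
    ∃ q : ℝ[X], q.Monic ∧ q.natDegree ≤ p.roots.toFinset.card ∧ ∀ x, 0 ≤ (p * q).eval x := by
  classical
  obtain ⟨v, hpv, -, hv⟩ := exists_prod_multiset_X_sub_C_mul p
  have hvmonic : v.Monic :=
    (monic_multiset_prod_of_monic _ _ fun a _ => monic_X_sub_C a).of_mul_monic_left (hpv ▸ hp)
  have hvpos (x : ℝ) : 0 < v.eval x :=
    zero_lt_eval_of_roots_lt_of_leadingCoeff_nonneg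
      (fun y hy => absurd ((mem_roots hvmonic.ne_zero).mpr hy) (by simp [hv]))
      (by simp [hvmonic.leadingCoeff])
  -- `q` raises every root of odd multiplicity to even multiplicity.
  refine ⟨∏ r ∈ p.roots.toFinset, (X - C r) ^ (p.roots.count r % 2),
    monic_prod_of_monic _ _ fun r _ => (monic_X_sub_C r).pow _, ?_, fun x => ?_⟩
  · rw [natDegree_prod_of_monic _ _ fun r _ => (monic_X_sub_C r).pow _]
    simp only [(monic_X_sub_C _).natDegree_pow, natDegree_X_sub_C, mul_one]
    calc _ ≤ ∑ _r ∈ p.roots.toFinset, 1 :=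
          Finset.sum_le_sum fun r _ => Nat.le_of_lt_succ (Nat.mod_lt _ two_pos)
      _ = _ := by simp
  · have hpx : p.eval x = (∏ r ∈ p.roots.toFinset, (x - r) ^ p.roots.count r) * v.eval x := by
      conv_lhs => rw [← hpv]
      rw [eval_mul, eval_multiset_prod, Multiset.map_map, Finset.prod_multiset_map_count]
      simp
    rw [eval_mul, hpx, eval_prod, mul_right_comm, ← Finset.prod_mul_distrib]
    refine mul_nonneg (Finset.prod_nonneg fun r _ => ?_) (hvpos x).le
    rw [eval_pow, eval_sub, eval_X, eval_C, ← pow_add]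
    exact Even.pow_nonneg (by rw [Nat.even_iff]; omega) _

theorem Polynomial.coeff_comp_neg_X {R : Type*} [CommRing R] (p : R[X]) (i : ℕ) :
    (p.comp (-X)).coeff i = (-1) ^ i * p.coeff i := by
  induction p using Polynomial.induction_on' with
  | add p q hp hq => simp only [add_comp, coeff_add, hp, hq, mul_add]
  | monomial k a =>
    rw [monomial_comp, neg_pow, ← C_1, ← C_neg, ← C_pow, ← mul_assoc, ← C_mul, coeff_C_mul,
      coeff_X_pow, coeff_monomial]
    by_cases h : k = i
    · subst h; simp [mul_comm]
    · simp [h, Ne.symm h]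

lemma Polynomial.mem_span_image_Iio_of_degree_lt {R : Type*} [CommRing R] {P : ℕ → R[X]}
    (hP : ∀ j, IsMonicOfDegree (P j) j) {k : ℕ} {h : R[X]} (hh : h.degree < k) :
    h ∈ Submodule.span R (P '' Iio k) := by
  induction k generalizing h with
  | zero => simp [degree_eq_bot.mp (by simpa using hh)]
  | succ k ih =>
    set c := h.coeff k
    have hrest : (h - C c * P k).degree < k := by
      rw [degree_lt_iff_coeff_zero]
      intro i hi
      rcases hi.eq_or_lt with rfl | hi
      · have : (P k).coeff k = 1 := by
          simpa [(hP k).natDegree_eq] using (hP k).monic.coeff_natDegree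
        simp [c, this]
      · have hPi : (P k).coeff i = 0 :=
          coeff_eq_zero_of_natDegree_lt ((hP k).natDegree_eq.trans_lt hi)
        have hhi : h.coeff i = 0 := (degree_lt_iff_coeff_zero h _).mp hh i (by exact_mod_cast hi)
        simp [hPi, hhi]
    rw [← sub_add_cancel h (C c * P k)]
    refine add_mem (Submodule.span_mono (image_mono (Iio_subset_Iio k.le_succ)) (ih hrest)) ?_
    rw [← smul_eq_C_mul]
    exact Submodule.smul_mem _ _ (Submodule.subset_span ⟨k, by simp, rfl⟩)

lemma Polynomial.X_sq_sub_C_sq {R : Type*} [CommRing R] (r : R) :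
    (X ^ 2 - C (r ^ 2) : R[X]) = (X - C r) * (X - C (-r)) := by
  simp only [map_pow, map_neg]
  ring

lemma Polynomial.natDegree_X_sq_sub_C {R : Type*} [CommRing R] [Nontrivial R] (c : R) :
    (X ^ 2 - C c : R[X]).natDegree = 2 := by
  compute_degree!

/-- The polynomials of degree `≤ n - 2` with the parity of `n`. -/
noncomputable def parityPolys (n : ℕ) : Submodule ℝ ℝ[X] :=
  Submodule.span ℝ (range fun j : Fin (n / 2) => (X : ℝ[X]) ^ (n - 2 - 2 * (j : ℕ)))

instance (n : ℕ) : FiniteDimensional ℝ (parityPolys n) :=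
  FiniteDimensional.span_of_finite ℝ (finite_range _)

theorem finrank_parityPolys_le (n : ℕ) : Module.finrank ℝ (parityPolys n) ≤ n / 2 :=
  (finrank_range_le_card _).trans (Fintype.card_fin _).le

theorem mem_parityPolys {n : ℕ} {f : ℝ[X]} (hdeg : f.natDegree + 2 ≤ n)
    (hpar : f.comp (-X) = (-1) ^ n * f) : f ∈ parityPolys n := by
  rw [f.as_sum_support]
  refine Submodule.sum_mem _ fun i hi => ?_
  have hfi := mem_support_iff.mp hi
  have hi_le : i ≤ f.natDegree := le_natDegree_of_ne_zero hfi
  have hi_mod : i % 2 = n % 2 := by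
    have h := congr_arg (coeff · i) hpar
    simp only [coeff_comp_neg_X, ← C_1, ← C_neg, ← C_pow, coeff_C_mul] at h
    have hin : (-1 : ℝ) ^ (i + n) = 1 := by
      rw [pow_add, mul_right_cancel₀ hfi h, ← mul_pow, neg_one_mul, neg_neg, one_pow]
    have := Nat.even_add.mp ((neg_one_pow_eq_one_iff_even (by norm_num)).mp hin)
    rw [Nat.even_iff, Nat.even_iff] at this
    omega
  rw [← C_mul_X_pow_eq_monomial, ← smul_eq_C_mul]
  refine Submodule.smul_mem _ _ (Submodule.subset_span ⟨⟨(n - 2 - i) / 2, by omega⟩, ?_⟩)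
  simp only
  congr 1
  omega

noncomputable def moment (w : ℝ → ℝ) (f : ℝ[X]) : ℝ := ∫ x, f.eval x * w x

structure IsEvenWeight (w : ℝ → ℝ) : Prop where
  integrable_eval_mul (f : ℝ[X]) : Integrable fun x => f.eval x * w x
  nonneg (x : ℝ) : 0 ≤ w x
  pos_of_ne_zero {x : ℝ} : x ≠ 0 → 0 < w x
  even : Function.Even w

namespace IsEvenWeight

section

variable {w : ℝ → ℝ} (hw : IsEvenWeight w)
include hw

noncomputable def momentₗ : ℝ[X] →ₗ[ℝ] ℝ where
  toFun := moment w
  map_add' f g := by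
    simp only [moment, eval_add, add_mul]
    exact integral_add (hw.integrable_eval_mul f) (hw.integrable_eval_mul g)
  map_smul' c f := by simp [moment, mul_assoc, integral_const_mul]

lemma momentₗ_apply (f : ℝ[X]) : hw.momentₗ f = moment w f := rfl

lemma moment_pos {f : ℝ[X]} (hf : f ≠ 0) (hnonneg : ∀ x, 0 ≤ f.eval x) : 0 < moment w f := by
  obtain ⟨M, hM, hroots⟩ := exists_forall_gt_eval_ne_zero hf
  rw [moment, integral_pos_iff_support_of_nonneg (fun x => mul_nonneg (hnonneg x) (hw.nonneg x))
    (hw.integrable_eval_mul f)]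
  refine (Measure.measure_Ioi_pos _ M).trans_le (measure_mono fun x (hx : M < x) => ?_)
  exact mul_ne_zero (hroots x hx) (hw.pos_of_ne_zero (by linarith)).ne'

lemma moment_mul_self_pos {f : ℝ[X]} (hf : f ≠ 0) : 0 < moment w (f * f) :=
  hw.moment_pos (mul_ne_zero hf hf) fun x => by simpa using mul_self_nonneg (f.eval x)

lemma moment_comp_neg_X (f : ℝ[X]) : moment w (f.comp (-X)) = moment w f := by
  simp only [moment, eval_comp, eval_neg, eval_X]
  conv_lhs => enter [2, x]; rw [← hw.even x]
  exact integral_neg_eq_self (fun x => f.eval x * w x) volume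

noncomputable def momentForm (m : ℝ[X]) : LinearMap.BilinForm ℝ ℝ[X] :=
  (LinearMap.mul ℝ ℝ[X]).compr₂ (hw.momentₗ ∘ₗ LinearMap.mulLeft ℝ m)

lemma momentForm_apply (m f g : ℝ[X]) : hw.momentForm m f g = moment w (m * (f * g)) := rfl

lemma moment_X_sq_sub_C_mul (z : ℝ) (f : ℝ[X]) :
    moment w ((X ^ 2 - C (z ^ 2)) * f) = moment w (X ^ 2 * f) - z ^ 2 * moment w f := by
  rw [sub_mul, ← smul_eq_C_mul, ← hw.momentₗ_apply, map_sub, map_smul]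
  rfl

end

variable {w₁ w₂ g : ℝ → ℝ} (hw₁ : IsEvenWeight w₁) (hw₂ : IsEvenWeight w₂)
  (hg : w₂ =ᵐ[volume] fun x => g x * w₁ x) (hg_mono : ∀ x y, |x| < |y| → g x < g y)
include hw₁ hw₂ hg hg_mono

theorem moment_X_sq_mul_lt {f : ℝ[X]} (hf : f ≠ 0) :
    moment w₁ (X ^ 2 * (f * f)) * moment w₂ (f * f) <
      moment w₂ (X ^ 2 * (f * f)) * moment w₁ (f * f) := by
  set u : ℝ → ℝ := fun x => (f * f).eval x * w₁ x
  have hmoment₁ : moment w₁ (X ^ 2 * (f * f)) = ∫ x, x ^ 2 * u x :=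
    integral_congr_ae (ae_of_all _ fun x => by simp only [u, eval_mul, eval_pow, eval_X]; ring)
  have hmoment₂ (h : ℝ[X]) : moment w₂ (h * (f * f)) = ∫ x, h.eval x * g x * u x :=
    integral_congr_ae (hg.mono fun x hx => by simp only [u, eval_mul, hx]; ring)
  have hint₂ (h : ℝ[X]) : Integrable (fun x => h.eval x * g x * u x) :=
    (hw₂.integrable_eval_mul (h * (f * f))).congr
      (hg.mono fun x hx => by simp only [u, eval_mul, hx]; ring)
  have hmoment₂_one := hmoment₂ 1
  have hmoment₂_X_sq := hmoment₂ (X ^ 2)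
  have hint₂_one := hint₂ 1
  have hint₂_X_sq := hint₂ (X ^ 2)
  simp only [one_mul, eval_one, eval_pow, eval_X] at hmoment₂_one hmoment₂_X_sq hint₂_one hint₂_X_sq
  obtain ⟨M, hM, hroots⟩ := exists_forall_gt_eval_ne_zero hf
  have hu_pos {x : ℝ} (hx : M < x) : 0 < u x :=
    mul_pos (by simpa [eval_mul] using mul_self_pos.mpr (hroots x hx))
      (hw₁.pos_of_ne_zero (by linarith))
  have key := integral_mul_integral_lt_integral_mul_integral (μ := volume) (u := u)
    (φ := fun x => x ^ 2) (g := g)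
    (fun x => mul_nonneg (by simpa [eval_mul] using mul_self_nonneg (f.eval x)) (hw₁.nonneg x))
    (hw₁.integrable_eval_mul _) ((hw₁.integrable_eval_mul (X ^ 2 * (f * f))).congr
      (ae_of_all _ fun x => by simp only [u, eval_mul, eval_pow, eval_X]; ring))
    hint₂_one hint₂_X_sq ?mono ?pos
  · rwa [hmoment₁, hmoment₂_one, hmoment₂_X_sq]
  case mono => exact sq_sub_sq_mul_sub_nonneg hg_mono
  case pos =>
    refine volume_prod_setOf_pos_pos (M := M) fun x y hx hxy => ?_
    have hxy' : |x| < |y| := by rwa [abs_of_pos (by linarith), abs_of_pos (by linarith)]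
    have := hg_mono _ _ hxy'
    have := sq_lt_sq.mpr hxy'
    exact mul_pos (by nlinarith) (mul_pos (hu_pos hx) (hu_pos (hx.trans hxy)))

end IsEvenWeight

structure IsOrthogonalPoly (w : ℝ → ℝ) (n : ℕ) (p : ℝ[X]) : Prop extends IsMonicOfDegree p n where
  moment_mul_eq_zero {h : ℝ[X]} : h.natDegree < n → moment w (p * h) = 0

namespace IsOrthogonalPoly

variable {w : ℝ → ℝ} (hw : IsEvenWeight w) {n : ℕ} {p : ℝ[X]}
include hw

theorem of_pairwise {P : ℕ → ℝ[X]} (hP : ∀ j, IsMonicOfDegree (P j) j)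
    (horth : ∀ j k, j ≠ k → moment w (P j * P k) = 0) (n : ℕ) : IsOrthogonalPoly w n (P n) where
  toIsMonicOfDegree := hP n
  moment_mul_eq_zero {h} hh := by
    have hspan : Submodule.span ℝ (P '' Iio n) ≤
        LinearMap.ker (hw.momentₗ ∘ₗ LinearMap.mulLeft ℝ (P n)) := by
      rw [Submodule.span_le]
      rintro _ ⟨j, hj, rfl⟩
      exact horth n j (ne_of_gt hj)
    exact hspan (mem_span_image_Iio_of_degree_lt hP
      (degree_le_natDegree.trans_lt (by exact_mod_cast hh)))

theorem unique {q : ℝ[X]} (hp : IsOrthogonalPoly w n p) (hq : IsOrthogonalPoly w n q) : p = q := by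
  rcases eq_or_ne n 0 with rfl | hn
  · rw [isMonicOfDegree_zero_iff.mp hp.1, isMonicOfDegree_zero_iff.mp hq.1]
  by_contra hne
  have hdeg := hp.natDegree_sub_lt hn hq.toIsMonicOfDegree
  have : moment w ((p - q) * (p - q)) = moment w (p * (p - q)) - moment w (q * (p - q)) := by
    rw [← hw.momentₗ_apply, ← hw.momentₗ_apply, ← hw.momentₗ_apply, ← map_sub, sub_mul]
  rw [hp.moment_mul_eq_zero hdeg, hq.moment_mul_eq_zero hdeg, sub_zero] at this
  exact (hw.moment_mul_self_pos (sub_ne_zero.mpr hne)).ne' this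

theorem neg_one_pow_mul_comp_neg_X (hp : IsOrthogonalPoly w n p) :
    IsOrthogonalPoly w n ((-1) ^ n * p.comp (-X)) where
  monic := hp.natDegree_eq ▸ hp.monic.neg_one_pow_natDegree_mul_comp_neg_X
  natDegree_eq := by
    rw [← C_1, ← C_neg, ← C_pow, natDegree_C_mul (by simp), natDegree_comp, hp.natDegree_eq]
    simp
  moment_mul_eq_zero {h} hh := by
    have : (-1) ^ n * p.comp (-X) * h = (-1 : ℝ) ^ n • (p * h.comp (-X)).comp (-X) := by
      simp [mul_comp, comp_neg_X_comp_neg_X, smul_eq_C_mul, mul_assoc]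
    rw [this, ← hw.momentₗ_apply, map_smul, hw.momentₗ_apply, hw.moment_comp_neg_X,
      hp.moment_mul_eq_zero (by simpa [natDegree_comp] using hh), smul_zero]

theorem comp_neg_X (hp : IsOrthogonalPoly w n p) : p.comp (-X) = (-1) ^ n * p := by
  conv_rhs => rw [← (hp.neg_one_pow_mul_comp_neg_X hw).unique hw hp]
  rw [← mul_assoc, ← mul_pow, neg_one_mul, neg_neg, one_pow, one_mul]

theorem eval_neg (hp : IsOrthogonalPoly w n p) (x : ℝ) : p.eval (-x) = (-1) ^ n * p.eval x := by
  simpa using congr_arg (eval x) (hp.comp_neg_X hw)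

theorem isRoot_neg (hp : IsOrthogonalPoly w n p) {r : ℝ} (hr : p.IsRoot r) : p.IsRoot (-r) := by
  simp [IsRoot, hp.eval_neg hw, hr.eq_zero]

theorem card_roots_toFinset (hp : IsOrthogonalPoly w n p) : p.roots.toFinset.card = n := by
  obtain ⟨q, hq, hqdeg, hnonneg⟩ := hp.monic.exists_monic_mul_nonneg
  refine le_antisymm ((Multiset.toFinset_card_le _).trans (hp.natDegree_eq ▸ card_roots' p)) ?_
  by_contra! hlt
  have := hw.moment_pos (mul_ne_zero hp.monic.ne_zero hq.ne_zero) hnonneg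
  rw [hp.moment_mul_eq_zero (hqdeg.trans_lt hlt)] at this
  exact this.false

theorem card_filter_pos_roots (hp : IsOrthogonalPoly w n p) :
    (p.roots.toFinset.filter (0 < ·)).card = n / 2 := by
  have hne := hp.monic.ne_zero
  rw [Finset.card_filter_pos_eq_half fun r hr => ?_, hp.card_roots_toFinset hw]
  simp only [Multiset.mem_toFinset, mem_roots hne] at hr ⊢
  exact hp.isRoot_neg hw hr

end IsOrthogonalPoly

noncomputable def quotRootPair (p : ℝ[X]) (r : ℝ) : ℝ[X] := p / (X ^ 2 - C (r ^ 2))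

noncomputable def quotRootPairSpan (p : ℝ[X]) (B : Finset ℝ) : Submodule ℝ ℝ[X] :=
  Submodule.span ℝ (range fun r : B => quotRootPair p r)

namespace IsOrthogonalPoly

variable {w : ℝ → ℝ} (hw : IsEvenWeight w) {n : ℕ} {p : ℝ[X]} (hp : IsOrthogonalPoly w n p)
include hw hp

section PositiveRoot

variable {r : ℝ} (hr : 0 < r) (hroot : p.IsRoot r)
include hr hroot

theorem X_sq_sub_C_dvd : X ^ 2 - C (r ^ 2) ∣ p := by
  rw [X_sq_sub_C_sq]
  refine (isCoprime_X_sub_C_of_isUnit_sub ?_).mul_dvd (dvd_iff_isRoot.mpr hroot)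
    (dvd_iff_isRoot.mpr (hp.isRoot_neg hw hroot))
  exact isUnit_iff_ne_zero.mpr (by linarith)

theorem mul_quotRootPair : (X ^ 2 - C (r ^ 2)) * quotRootPair p r = p :=
  EuclideanDomain.mul_div_cancel' (ne_zero_of_natDegree_gt (n := 0) (by
    rw [natDegree_X_sq_sub_C]; norm_num)) (hp.X_sq_sub_C_dvd hw hr hroot)

theorem quotRootPair_ne_zero : quotRootPair p r ≠ 0 := fun h =>
  hp.monic.ne_zero (by rw [← hp.mul_quotRootPair hw hr hroot, h, mul_zero])

theorem natDegree_quotRootPair : (quotRootPair p r).natDegree + 2 = n := by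
  have h := congr_arg natDegree (hp.mul_quotRootPair hw hr hroot)
  rw [natDegree_mul (ne_zero_of_natDegree_gt (n := 0) (by rw [natDegree_X_sq_sub_C]; norm_num))
    (hp.quotRootPair_ne_zero hw hr hroot), natDegree_X_sq_sub_C, hp.natDegree_eq] at h
  omega

theorem natDegree_quotRootPair_lt : (quotRootPair p r).natDegree < n := by
  linarith [hp.natDegree_quotRootPair hw hr hroot]

theorem quotRootPair_comp_neg_X : (quotRootPair p r).comp (-X) = (-1) ^ n * quotRootPair p r := by
  have h := hp.comp_neg_X hw
  rw [← hp.mul_quotRootPair hw hr hroot, mul_comp] at h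
  refine mul_left_cancel₀ (ne_zero_of_natDegree_gt (n := 0)
    (by rw [natDegree_X_sq_sub_C (r ^ 2)]; norm_num)) ?_
  simpa [mul_left_comm] using h

theorem quotRootPair_mem_parityPolys : quotRootPair p r ∈ parityPolys n :=
  mem_parityPolys (hp.natDegree_quotRootPair hw hr hroot).le
    (hp.quotRootPair_comp_neg_X hw hr hroot)

theorem moment_X_sq_sub_C_mul_quotRootPair (z : ℝ) {g : ℝ[X]} (hg : g.natDegree < n) :
    moment w ((X ^ 2 - C (z ^ 2)) * (quotRootPair p r * g)) =
      (r ^ 2 - z ^ 2) * moment w (quotRootPair p r * g) := by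
  have : (X ^ 2 - C (z ^ 2)) * (quotRootPair p r * g) =
      p * g + (r ^ 2 - z ^ 2) • (quotRootPair p r * g) := by
    rw [smul_eq_C_mul, C_sub]
    linear_combination g * hp.mul_quotRootPair hw hr hroot
  rw [this, ← hw.momentₗ_apply, map_add, map_smul, hw.momentₗ_apply, hw.momentₗ_apply,
    hp.moment_mul_eq_zero hg, zero_add, smul_eq_mul]

end PositiveRoot

theorem moment_quotRootPair_mul_eq_zero {r s : ℝ} (hr : 0 < r) (hroot_r : p.IsRoot r)
    (hs : 0 < s) (hroot_s : p.IsRoot s) (hrs : r ≠ s) :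
    moment w (quotRootPair p r * quotRootPair p s) = 0 := by
  -- The multiplier `X ^ 2 - s ^ 2` acts as `r ^ 2 - s ^ 2` on one side and as `0` on the other.
  have h₁ := hp.moment_X_sq_sub_C_mul_quotRootPair hw hr hroot_r s
    (hp.natDegree_quotRootPair_lt hw hs hroot_s)
  have h₂ := hp.moment_X_sq_sub_C_mul_quotRootPair hw hs hroot_s s
    (hp.natDegree_quotRootPair_lt hw hr hroot_r)
  rw [mul_comm (quotRootPair p s), sub_self, zero_mul, h₁] at h₂
  refine (mul_eq_zero.mp h₂).resolve_left fun h => hrs ?_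
  nlinarith

variable {B : Finset ℝ} (hB : ∀ r ∈ B, 0 < r ∧ p.IsRoot r)
include hB

theorem momentForm_quotRootPair (z : ℝ) (r s : B) :
    hw.momentForm (X ^ 2 - C (z ^ 2)) (quotRootPair p r) (quotRootPair p s) =
      (r ^ 2 - z ^ 2) * moment w (quotRootPair p r * quotRootPair p s) :=
  hp.moment_X_sq_sub_C_mul_quotRootPair hw (hB r r.2).1 (hB r r.2).2 z
    (hp.natDegree_quotRootPair_lt hw (hB s s.2).1 (hB s s.2).2)

theorem iIsOrtho_quotRootPair (z : ℝ) :
    (hw.momentForm (X ^ 2 - C (z ^ 2))).iIsOrtho fun r : B => quotRootPair p r := by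
  intro r s hrs
  change hw.momentForm _ _ _ = 0
  rw [hp.momentForm_quotRootPair hw hB, hp.moment_quotRootPair_mul_eq_zero hw (hB r r.2).1
    (hB r r.2).2 (hB s s.2).1 (hB s s.2).2 (Subtype.coe_ne_coe.mpr hrs), mul_zero]

theorem moment_quotRootPair_mul_self_pos (r : B) :
    0 < moment w (quotRootPair p r * quotRootPair p r) :=
  hw.moment_mul_self_pos (hp.quotRootPair_ne_zero hw (hB r r.2).1 (hB r r.2).2)

theorem finrank_quotRootPairSpan : Module.finrank ℝ (quotRootPairSpan p B) = B.card := by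
  have hli : LinearIndependent ℝ fun r : B => quotRootPair p r :=
    LinearMap.BilinForm.linearIndependent_of_iIsOrtho (hp.iIsOrtho_quotRootPair hw hB 0)
      fun r => by
        rw [hp.momentForm_quotRootPair hw hB, sq (0 : ℝ), mul_zero, sub_zero]
        exact (mul_pos (pow_pos (hB r r.2).1 2) (hp.moment_quotRootPair_mul_self_pos hw hB r)).ne'
  rw [quotRootPairSpan, finrank_span_eq_card hli, Fintype.card_coe]

theorem quotRootPairSpan_le_parityPolys : quotRootPairSpan p B ≤ parityPolys n :=
  Submodule.span_le.mpr <| range_subset_iff.mpr fun r =>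
    hp.quotRootPair_mem_parityPolys hw (hB r r.2).1 (hB r r.2).2

theorem exists_moment_X_sq_sub_C_mul_self_eq {f : ℝ[X]} (hf : f ∈ quotRootPairSpan p B) (z : ℝ) :
    ∃ c : B → ℝ, moment w ((X ^ 2 - C (z ^ 2)) * (f * f)) =
      ∑ r : B, c r * c r * ((r ^ 2 - z ^ 2) * moment w (quotRootPair p r * quotRootPair p r)) := by
  obtain ⟨c, rfl⟩ := (Submodule.mem_span_range_iff_exists_fun ℝ).mp hf
  refine ⟨c, ?_⟩
  rw [← IsEvenWeight.momentForm_apply hw, LinearMap.BilinForm.apply_sum_smul_self_of_iIsOrtho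
    (hp.iIsOrtho_quotRootPair hw hB z)]
  simp_rw [hp.momentForm_quotRootPair hw hB]

theorem sq_mul_moment_le_of_mem_quotRootPairSpan {z : ℝ} (hz : 0 ≤ z) (hzB : ∀ r ∈ B, z ≤ r)
    {f : ℝ[X]} (hf : f ∈ quotRootPairSpan p B) :
    z ^ 2 * moment w (f * f) ≤ moment w (X ^ 2 * (f * f)) := by
  obtain ⟨c, hc⟩ := hp.exists_moment_X_sq_sub_C_mul_self_eq hw hB hf z
  have : 0 ≤ moment w ((X ^ 2 - C (z ^ 2)) * (f * f)) := by
    rw [hc]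
    refine Finset.sum_nonneg fun r _ => mul_nonneg (mul_self_nonneg _) (mul_nonneg ?_
      (hp.moment_quotRootPair_mul_self_pos hw hB r).le)
    nlinarith [hzB r r.2]
  linarith [hw.moment_X_sq_sub_C_mul z (f * f)]

theorem moment_le_sq_mul_of_mem_quotRootPairSpan {z : ℝ} (hzB : ∀ r ∈ B, r ≤ z)
    {f : ℝ[X]} (hf : f ∈ quotRootPairSpan p B) :
    moment w (X ^ 2 * (f * f)) ≤ z ^ 2 * moment w (f * f) := by
  obtain ⟨c, hc⟩ := hp.exists_moment_X_sq_sub_C_mul_self_eq hw hB hf z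
  have : moment w ((X ^ 2 - C (z ^ 2)) * (f * f)) ≤ 0 := by
    rw [hc]
    refine Finset.sum_nonpos fun r _ => mul_nonpos_of_nonneg_of_nonpos (mul_self_nonneg _)
      (mul_nonpos_of_nonpos_of_nonneg ?_ (hp.moment_quotRootPair_mul_self_pos hw hB r).le)
    nlinarith [hzB r r.2, (hB r r.2).1]
  linarith [hw.moment_X_sq_sub_C_mul z (f * f)]

end IsOrthogonalPoly

namespace IsNthLargestPosZero

variable {p : ℝ[X]} {ν : ℕ} {z : ℝ}

theorem exists_finset_ge (h : IsNthLargestPosZero p ν z) (hν : 1 ≤ ν) (hp : p ≠ 0) :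
    ∃ B : Finset ℝ, B.card = ν ∧ ∀ r ∈ B, (0 < r ∧ p.IsRoot r) ∧ z ≤ r := by
  obtain ⟨hz, hroot, hcard⟩ := h
  refine ⟨insert z (p.roots.toFinset.filter (z < ·)), ?_, fun r hr => ?_⟩
  · rw [Finset.card_insert_of_notMem (by simp), hcard]
    omega
  rcases Finset.mem_insert.mp hr with rfl | hr
  · exact ⟨⟨hz, hroot⟩, le_rfl⟩
  · obtain ⟨hr, hzr⟩ := Finset.mem_filter.mp hr
    exact ⟨⟨hz.trans hzr, (mem_roots hp).mp (Multiset.mem_toFinset.mp hr)⟩, hzr.le⟩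

theorem exists_finset_le (h : IsNthLargestPosZero p ν z) (hν : 1 ≤ ν) (hp : p ≠ 0) :
    ∃ B : Finset ℝ, (p.roots.toFinset.filter (0 < ·)).card + 1 ≤ B.card + ν ∧
      ∀ r ∈ B, (0 < r ∧ p.IsRoot r) ∧ r ≤ z := by
  obtain ⟨-, -, hcard⟩ := h
  refine ⟨p.roots.toFinset.filter fun r => 0 < r ∧ r ≤ z, ?_, fun r hr => ?_⟩
  · have hsub : p.roots.toFinset.filter (0 < ·) ⊆
        p.roots.toFinset.filter (fun r => 0 < r ∧ r ≤ z) ∪ p.roots.toFinset.filter (z < ·) := by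
      intro r
      simp only [Finset.mem_filter, Finset.mem_union]
      exact fun ⟨hr, hr0⟩ => (le_or_gt r z).imp (fun h => ⟨hr, hr0, h⟩) fun h => ⟨hr, h⟩
    have := (Finset.card_le_card hsub).trans (Finset.card_union_le _ _)
    omega
  · obtain ⟨hr, hr0, hrz⟩ := Finset.mem_filter.mp hr
    exact ⟨⟨hr0, (mem_roots hp).mp (Multiset.mem_toFinset.mp hr)⟩, hrz⟩

theorem lt_of_isOrthogonalPoly {w₁ w₂ g : ℝ → ℝ} (hw₁ : IsEvenWeight w₁) (hw₂ : IsEvenWeight w₂)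
    (hg : w₂ =ᵐ[volume] fun x => g x * w₁ x) (hg_mono : ∀ x y, |x| < |y| → g x < g y)
    {n ν : ℕ} (hν : 1 ≤ ν) {p q : ℝ[X]} (hp : IsOrthogonalPoly w₁ n p)
    (hq : IsOrthogonalPoly w₂ n q) {z₁ z₂ : ℝ} (h₁ : IsNthLargestPosZero p ν z₁)
    (h₂ : IsNthLargestPosZero q ν z₂) : z₁ < z₂ := by
  obtain ⟨B₁, hcard₁, hB₁⟩ := h₁.exists_finset_ge hν hp.monic.ne_zero
  obtain ⟨B₂, hcard₂, hB₂⟩ := h₂.exists_finset_le hν hq.monic.ne_zero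
  rw [hq.card_filter_pos_roots hw₂] at hcard₂
  obtain ⟨f, hf0, hf₁, hf₂⟩ := Submodule.exists_ne_zero_mem_inf_of_finrank_lt
    (hp.quotRootPairSpan_le_parityPolys hw₁ fun r hr => (hB₁ r hr).1)
    (hq.quotRootPairSpan_le_parityPolys hw₂ fun r hr => (hB₂ r hr).1) (by
      rw [hp.finrank_quotRootPairSpan hw₁ fun r hr => (hB₁ r hr).1,
        hq.finrank_quotRootPairSpan hw₂ fun r hr => (hB₂ r hr).1]
      linarith [finrank_parityPolys_le n])
  have hlow := hp.sq_mul_moment_le_of_mem_quotRootPairSpan hw₁ (fun r hr => (hB₁ r hr).1)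
    h₁.1.le (fun r hr => (hB₁ r hr).2) hf₁
  have hup := hq.moment_le_sq_mul_of_mem_quotRootPairSpan hw₂ (fun r hr => (hB₂ r hr).1)
    (fun r hr => (hB₂ r hr).2) hf₂
  have hcheb := hw₁.moment_X_sq_mul_lt hw₂ hg hg_mono hf0
  have hN₁ := hw₁.moment_mul_self_pos hf0
  have hN₂ := hw₂.moment_mul_self_pos hf0
  have hsq : z₁ ^ 2 < z₂ ^ 2 := by
    by_contra! hle
    nlinarith [mul_le_mul_of_nonneg_right hlow hN₂.le, mul_le_mul_of_nonneg_right hup hN₁.le,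
      mul_le_mul_of_nonneg_right hle (mul_pos hN₁ hN₂).le]
  exact (pow_lt_pow_iff_left₀ h₁.1.le h₂.1.le two_ne_zero).mp hsq

end IsNthLargestPosZero

lemma mul_sq_sub_pow_le {m : ℕ} (hm : 2 ≤ m) (t x : ℝ) :
    t * x ^ 2 - x ^ (2 * m) ≤ (|t| + 1) ^ 2 - x ^ 2 := by
  have hx4 : (x ^ 2) ^ 2 ≤ x ^ (2 * m) ∨ x ^ 2 ≤ 1 := by
    rcases le_or_gt (x ^ 2) 1 with h | h
    · exact .inr h
    · exact .inl (by rw [pow_mul]; exact pow_le_pow_right₀ h.le hm)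
  have := le_abs_self t
  rcases hx4 with h | h <;> nlinarith [sq_nonneg x, abs_nonneg t, sq_nonneg (x ^ 2 - |t| - 1),
    pow_nonneg (sq_nonneg x) m, show x ^ (2 * m) = (x ^ 2) ^ m from pow_mul x 2 m]

lemma integrable_abs_rpow_mul_exp {m : ℕ} (hm : 2 ≤ m) (t : ℝ) {s : ℝ} (hs : -1 < s) :
    Integrable fun x : ℝ => |x| ^ s * exp (t * x ^ 2 - x ^ (2 * m)) := by
  refine Function.Even.integrable_of_integrableOn_Ioi (fun x => by simp) ?_
  refine (((integrableOn_rpow_mul_exp_neg_mul_sq one_pos hs).const_mul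
    (exp ((|t| + 1) ^ 2)))).mono' (by fun_prop) ?_
  filter_upwards [ae_restrict_mem measurableSet_Ioi] with x (hx : 0 < x)
  rw [norm_of_nonneg (by positivity), abs_of_pos hx, mul_left_comm, ← exp_add]
  gcongr
  linarith [mul_sq_sub_pow_le hm t x]

lemma integrable_pow_mul_freudWeight {m : ℕ} (hm : 2 ≤ m) {lam : ℝ} (hlam : -1 < lam) (t : ℝ)
    (i : ℕ) : Integrable fun x : ℝ => x ^ i * freudWeight m lam t x := by
  have hs : -1 < 2 * lam + 1 + i := by linarith [(Nat.cast_nonneg i : (0 : ℝ) ≤ i)]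
  refine (integrable_abs_rpow_mul_exp hm t hs).mono' (by unfold freudWeight; fun_prop)
    (Eventually.of_forall fun x => ?_)
  rw [freudWeight, ← mul_assoc, norm_mul, norm_of_nonneg (exp_pos _).le, norm_mul, norm_pow,
    Real.norm_eq_abs, Real.norm_eq_abs, abs_of_nonneg (Real.rpow_nonneg (abs_nonneg x) _)]
  gcongr
  rcases eq_or_ne x 0 with rfl | hx
  · rcases i.eq_zero_or_pos with rfl | hi
    · simp
    · simp [zero_pow hi.ne', Real.rpow_nonneg]
  · rw [Real.rpow_add (abs_pos.mpr hx) (2 * lam + 1) i, Real.rpow_natCast, mul_comm]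

theorem isEvenWeight_freudWeight {m : ℕ} (hm : 2 ≤ m) {lam : ℝ} (hlam : -1 < lam) (t : ℝ) :
    IsEvenWeight (freudWeight m lam t) where
  integrable_eval_mul f := by
    simp_rw [eval_eq_sum_range, Finset.sum_mul, mul_assoc]
    exact integrable_finsetSum _ fun i _ =>
      (integrable_pow_mul_freudWeight hm hlam t i).const_mul _
  nonneg x := by unfold freudWeight; positivity
  pos_of_ne_zero hx := mul_pos (Real.rpow_pos_of_pos (abs_pos.mpr hx) _) (exp_pos _)
  even x := by simp [freudWeight]

lemma freudWeight_eq_abs_rpow_mul {m : ℕ} {lam₁ lam₂ t x : ℝ} (hx : x ≠ 0) :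
    freudWeight m lam₂ t x = |x| ^ (2 * (lam₂ - lam₁)) * freudWeight m lam₁ t x := by
  rw [freudWeight, freudWeight, ← mul_assoc, ← Real.rpow_add (abs_pos.mpr hx)]
  ring_nf

lemma freudWeight_eq_exp_mul {m : ℕ} {lam t₁ t₂ x : ℝ} :
    freudWeight m lam t₂ x = exp ((t₂ - t₁) * x ^ 2) * freudWeight m lam t₁ x := by
  rw [freudWeight, freudWeight, mul_left_comm, ← exp_add]
  ring_nf

/-- For integer `m ≥ 2` and `n ≥ 1`, each positive zero `x_{ν,n}(t,λ)`
(`1 ≤ ν ≤ ⌊n/2⌋`) of the monic polynomial orthogonal with respect to the generalised higher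
order Freud weight is strictly increasing in `λ` (for `λ > −1`, `t` fixed) and strictly
increasing in `t` (for `t ∈ ℝ`, `λ > −1` fixed). -/
theorem zeros_monotonicity (m : ℕ) (hm : 2 ≤ m)
    (P : ℝ → ℝ → ℕ → Polynomial ℝ)
    (hmonic : ∀ (t lam : ℝ), -1 < lam → ∀ n, (P t lam n).Monic)
    (hdeg : ∀ (t lam : ℝ), -1 < lam → ∀ n, (P t lam n).natDegree = n)
    (horth : ∀ (t lam : ℝ), -1 < lam → ∀ j k, j ≠ k →
      ∫ x : ℝ, (P t lam j).eval x * (P t lam k).eval x * freudWeight m lam t x = 0) :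
    ∀ n : ℕ, 1 ≤ n → ∀ ν : ℕ, 1 ≤ ν → ν ≤ n / 2 →
      (∀ (t lam₁ lam₂ z₁ z₂ : ℝ), -1 < lam₁ → lam₁ < lam₂ →
        IsNthLargestPosZero (P t lam₁ n) ν z₁ → IsNthLargestPosZero (P t lam₂ n) ν z₂ →
        z₁ < z₂) ∧
      (∀ (lam t₁ t₂ z₁ z₂ : ℝ), -1 < lam → t₁ < t₂ →
        IsNthLargestPosZero (P t₁ lam n) ν z₁ → IsNthLargestPosZero (P t₂ lam n) ν z₂ →
        z₁ < z₂) := by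
  intro n _ ν hν _
  have hw {t lam : ℝ} (hlam : -1 < lam) := isEvenWeight_freudWeight hm hlam t
  have hOP {t lam : ℝ} (hlam : -1 < lam) : IsOrthogonalPoly (freudWeight m lam t) n (P t lam n) :=
    .of_pairwise (hw hlam) (fun j => ⟨hdeg t lam hlam j, hmonic t lam hlam j⟩)
      (fun j k hjk => by simpa only [moment, eval_mul] using horth t lam hlam j k hjk) n
  refine ⟨fun t lam₁ lam₂ z₁ z₂ hlam₁ hlt h₁ h₂ => ?_, fun lam t₁ t₂ z₁ z₂ hlam hlt h₁ h₂ => ?_⟩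
  · have hlam₂ : -1 < lam₂ := hlam₁.trans hlt
    exact h₁.lt_of_isOrthogonalPoly (hw hlam₁) (hw hlam₂)
      ((Measure.ae_ne volume 0).mono fun x hx => freudWeight_eq_abs_rpow_mul hx)
      (fun x y hxy => Real.rpow_lt_rpow (abs_nonneg x) hxy (by linarith)) hν
      (hOP hlam₁) (hOP hlam₂) h₂
  · exact h₁.lt_of_isOrthogonalPoly (hw hlam) (hw hlam)
      (ae_of_all _ fun x => freudWeight_eq_exp_mul)
      (fun x y hxy => exp_lt_exp.mpr (by nlinarith [sq_lt_sq.mpr hxy])) hν (hOP hlam) (hOP hlam) h₂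
end
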